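/- arXiv:2212.07109 — 5 statements merged into one kernel-verified Lean document; each statement's English description precedes it below -/
import Mathlib

section
/- Let A be a finite set of integers with |A| ≥ 3. Then E(A) ≡ |A| (mod 4), where E(A) denotes the additive energy of A. -/
/-- The additive energy of a finite set `A`: the number of quadruples
`(a₁, a₂, a₃, a₄) ∈ A⁴` with `a₁ + a₂ = a₃ + a₄`. -/
def addEnergy {α : Type*} [DecidableEq α] [Add α] (A : Finset α) : ℕ :=
  (((A ×ˢ A) ×ˢ A ×ˢ A).filter fun p => p.1.1 + p.1.2 = p.2.1 + p.2.2).card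

/-- The number of representations of `s` as a sum of two elements of `A`. -/
def rep (A : Finset ℤ) (s : ℤ) : ℕ :=
  ((A ×ˢ A).filter fun p => p.1 + p.2 = s).card

lemma rep_eq_card_filter (A : Finset ℤ) (s : ℤ) :
    rep A s = (A.filter fun a => s - a ∈ A).card := by
  apply Finset.card_bij' (fun p _ => p.1) (fun a _ => (a, s - a))
  · intro p hp
    simp only [Finset.mem_filter, Finset.mem_product] at hp ⊢
    exact ⟨hp.1.1, by rw [show s - p.1 = p.2 by omega]; exact hp.1.2⟩
  · intro a ha
    simp only [Finset.mem_filter, Finset.mem_product] at ha ⊢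
    exact ⟨⟨ha.1, ha.2⟩, by omega⟩
  · intro p hp
    simp only [Finset.mem_filter, Finset.mem_product] at hp
    ext <;> simp <;> omega
  · intro a _; rfl

lemma rep_odd_iff (A : Finset ℤ) (s : ℤ) : Odd (rep A s) ↔ ∃ a ∈ A, a + a = s := by
  rw [rep_eq_card_filter]
  set B := A.filter fun a => s - a ∈ A with hB
  have hsplit : (B.filter fun a => a + a = s).card +
      (B.filter fun a => ¬ a + a = s).card = B.card :=
    Finset.card_filter_add_card_filter_not _
  have hunion : B.filter (fun a => ¬ a + a = s) =
      (B.filter fun a => a + a < s) ∪ (B.filter fun a => s < a + a) := by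
    ext b
    simp only [Finset.mem_filter, Finset.mem_union]
    constructor
    · rintro ⟨hb, hne⟩
      rcases lt_or_gt_of_ne hne with h | h
      · exact Or.inl ⟨hb, h⟩
      · exact Or.inr ⟨hb, h⟩
    · rintro (⟨hb, h⟩ | ⟨hb, h⟩) <;> exact ⟨hb, by omega⟩
  have hdisj : Disjoint (B.filter fun a => a + a < s) (B.filter fun a => s < a + a) := by
    rw [Finset.disjoint_left]
    intro a ha ha'
    simp only [Finset.mem_filter] at ha ha'
    omega
  have hlt_gt : (B.filter fun a => s < a + a).card = (B.filter fun a => a + a < s).card := by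
    apply Finset.card_bij' (fun a _ => s - a) (fun a _ => s - a)
    · intro a ha
      simp only [hB, Finset.mem_filter] at ha ⊢
      refine ⟨⟨ha.1.2, ?_⟩, by omega⟩
      rw [show s - (s - a) = a by omega]; exact ha.1.1
    · intro a ha
      simp only [hB, Finset.mem_filter] at ha ⊢
      refine ⟨⟨ha.1.2, ?_⟩, by omega⟩
      rw [show s - (s - a) = a by omega]; exact ha.1.1
    · intro a _; omega
    · intro a _; omega
  have hcard : B.card = (B.filter fun a => a + a = s).card +
      2 * (B.filter fun a => a + a < s).card := by
    rw [← hsplit, hunion, Finset.card_union_of_disjoint hdisj, hlt_gt]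
    ring
  rcases em (∃ a ∈ A, a + a = s) with hex | hex
  · obtain ⟨a, ha, has⟩ := hex
    have h1 : B.filter (fun b => b + b = s) = {a} := by
      ext b
      simp only [hB, Finset.mem_filter, Finset.mem_singleton]
      constructor
      · rintro ⟨⟨_, _⟩, h3⟩; omega
      · rintro rfl
        refine ⟨⟨ha, ?_⟩, has⟩
        rw [show s - b = b by omega]; exact ha
    simp only [show ∃ a ∈ A, a + a = s from ⟨a, ha, has⟩, iff_true]
    rw [Nat.odd_iff, hcard, h1, Finset.card_singleton]
    omega
  · have h0 : B.filter (fun b => b + b = s) = ∅ := by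
      ext b
      simp only [hB, Finset.mem_filter, Finset.notMem_empty, iff_false, not_and]
      rintro ⟨hbA, _⟩ hbs
      exact hex ⟨b, hbA, hbs⟩
    simp only [hex, iff_false]
    rw [Nat.odd_iff, hcard, h0, Finset.card_empty]
    omega

lemma sq_mod_four (n : ℕ) : n * n % 4 = if Odd n then 1 else 0 := by
  rcases Nat.even_or_odd n with ⟨k, hk⟩ | ⟨k, hk⟩
  · rw [if_neg (by rw [Nat.not_odd_iff_even]; exact ⟨k, hk⟩)]
    subst hk
    have : (k + k) * (k + k) = 4 * (k * k) := by ring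
    omega
  · rw [if_pos ⟨k, hk⟩]; subst hk
    have : (2 * k + 1) * (2 * k + 1) = 4 * (k * k + k) + 1 := by ring
    omega

/-- For a finite set `A` of integers with `|A| ≥ 3`, `E(A) ≡ |A| (mod 4)`. -/
theorem energy_mod_four (A : Finset ℤ) (hA : 3 ≤ A.card) :
    addEnergy A % 4 = A.card % 4 := by
  classical
  set I : Finset ℤ := (A ×ˢ A).image (fun p => p.1 + p.2) with hI
  have hE : addEnergy A = ∑ s ∈ I, rep A s * rep A s := by
    rw [addEnergy, Finset.card_eq_sum_card_fiberwise
      (f := fun x : (ℤ × ℤ) × ℤ × ℤ => x.2.1 + x.2.2) (t := I) (by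
        intro x hx
        simp only [Finset.mem_coe, Finset.mem_filter, Finset.mem_product] at hx
        exact Finset.mem_image.mpr ⟨x.2, Finset.mem_product.mpr hx.1.2, rfl⟩)]
    refine Finset.sum_congr rfl fun s _ => ?_
    have hfib : ((((A ×ˢ A) ×ˢ A ×ˢ A).filter fun p => p.1.1 + p.1.2 = p.2.1 + p.2.2).filter
        fun x => x.2.1 + x.2.2 = s) =
        ((A ×ˢ A).filter fun p => p.1 + p.2 = s) ×ˢ ((A ×ˢ A).filter fun p => p.1 + p.2 = s) := by
      ext x
      simp only [Finset.mem_filter, Finset.mem_product]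
      constructor
      · rintro ⟨⟨⟨h1, h2⟩, h3⟩, h4⟩
        exact ⟨⟨h1, by omega⟩, ⟨h2, h4⟩⟩
      · rintro ⟨⟨h1, h2⟩, ⟨h3, h4⟩⟩
        exact ⟨⟨⟨h1, h3⟩, by omega⟩, h4⟩
    rw [hfib, Finset.card_product, rep]
  have hN : (I.filter fun s => Odd (rep A s)).card = A.card := by
    symm
    apply Finset.card_bij (fun a _ => a + a)
    · intro a ha
      refine Finset.mem_filter.mpr ⟨?_, (rep_odd_iff A _).mpr ⟨a, ha, rfl⟩⟩
      exact Finset.mem_image.mpr ⟨(a, a), Finset.mem_product.mpr ⟨ha, ha⟩, rfl⟩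
    · intro a _ b _ h; omega
    · intro s hs
      obtain ⟨a, ha, has⟩ := (rep_odd_iff A s).mp (Finset.mem_filter.mp hs).2
      exact ⟨a, ha, has⟩
  calc addEnergy A % 4 = (∑ s ∈ I, rep A s * rep A s) % 4 := by rw [hE]
    _ = (∑ s ∈ I, rep A s * rep A s % 4) % 4 := Finset.sum_nat_mod _ _ _
    _ = (∑ s ∈ I, if Odd (rep A s) then 1 else 0) % 4 := by
        congr 1; exact Finset.sum_congr rfl fun s _ => sq_mod_four _
    _ = (I.filter fun s => Odd (rep A s)).card % 4 := by
        rw [Finset.card_filter]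
    _ = A.card % 4 := by rw [hN]
end

section
/- For every finite set A of integers with |A| = n, the additive energy satisfies E(A) ≤ n² + (n−1)n(2n−1)/3. -/
namespace EnergyBoundAux

open Finset

/-- `dcount A d` is the number of `v ∈ A` with `v + d ∈ A`, i.e. the number of
representations of `d` as a difference of two elements of `A`. -/
def dcount (A : Finset ℤ) (d : ℤ) : ℕ := (A.filter fun v => v + d ∈ A).card

/-- The rank of `x` in `A`: the number of elements of `A` smaller than `x`. -/
def rk (A : Finset ℤ) (x : ℤ) : ℕ := (A.filter fun a => a < x).card

lemma energy_eq (A : Finset ℤ) :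
    _root_.addEnergy A = ∑ p ∈ A ×ˢ A, dcount A (p.1 - p.2) := by
  classical
  unfold _root_.addEnergy
  rw [Finset.card_eq_sum_card_fiberwise (f := fun q => (q.1.1, q.2.1)) (t := A ×ˢ A)
    (by intro q hq; simp only [mem_filter, mem_product, Finset.mem_coe] at hq ⊢; exact ⟨hq.1.1.1, hq.1.2.1⟩)]
  refine Finset.sum_congr rfl fun p hp => ?_
  obtain ⟨x, y⟩ := p
  simp only [mem_product] at hp
  unfold dcount
  refine Finset.card_bij' (fun q _ => q.1.2)
    (fun v _ => ((x, v), (y, v + (x - y)))) ?_ ?_ ?_ ?_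
  · rintro ⟨⟨a, b⟩, ⟨c, d⟩⟩ hq
    simp only [mem_filter, mem_product, Prod.mk.injEq] at hq ⊢
    obtain ⟨⟨⟨⟨h1, h2⟩, h3, h4⟩, h5⟩, h6, h7⟩ := hq
    refine ⟨h2, ?_⟩
    have he : b + (x - y) = d := by rw [← h6, ← h7]; linarith
    rw [he]; exact h4
  · intro v hv
    simp only [mem_filter] at hv
    simp only [mem_filter, mem_product, Prod.mk.injEq]
    exact ⟨⟨⟨⟨hp.1, hv.1⟩, hp.2, hv.2⟩, by ring⟩, trivial, trivial⟩
  · rintro ⟨⟨a, b⟩, ⟨c, d⟩⟩ hq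
    simp only [mem_filter, mem_product, Prod.mk.injEq] at hq
    obtain ⟨⟨_, h5⟩, h6, h7⟩ := hq
    have he : b + (x - y) = d := by rw [← h6, ← h7]; linarith
    simp [h6, h7, he]
  · intro v hv; rfl

lemma dcount_neg (A : Finset ℤ) (d : ℤ) : dcount A (-d) = dcount A d := by
  unfold dcount
  refine Finset.card_bij' (fun v _ => v + -d) (fun w _ => w + d) ?_ ?_ ?_ ?_
  · intro v hv; simp only [mem_filter] at hv ⊢
    exact ⟨hv.2, by simpa using hv.1⟩
  · intro w hw; simp only [mem_filter] at hw ⊢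
    exact ⟨hw.2, by simpa using hw.1⟩
  · intro v _; ring
  · intro w _; ring

lemma rk_mono (A : Finset ℤ) {x y : ℤ} (h : x ≤ y) : rk A x ≤ rk A y := by
  apply card_le_card
  intro a ha; simp only [mem_filter] at ha ⊢; exact ⟨ha.1, lt_of_lt_of_le ha.2 h⟩

lemma key (A : Finset ℤ) {x y : ℤ} :
    dcount A (x - y) + rk A x ≤ A.card + rk A y := by
  classical
  set B := A.filter (fun v => v + (x - y) ∈ A) with hB
  have hsplit : (B.filter fun v => v < y).card + (B.filter fun v => ¬ v < y).card = B.card :=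
    Finset.card_filter_add_card_filter_not _
  have h1 : (B.filter fun v => v < y).card ≤ rk A y := by
    apply card_le_card
    intro a ha
    simp only [hB, mem_filter] at ha ⊢
    exact ⟨ha.1.1, ha.2⟩
  have h2 : (B.filter fun v => ¬ v < y).card ≤ (A.filter fun a => ¬ a < x).card := by
    apply Finset.card_le_card_of_injOn (fun v => v + (x - y))
    · intro v hv
      simp only [hB, mem_filter, Finset.mem_coe] at hv ⊢
      exact ⟨hv.1.2, by push_neg at hv ⊢; linarith [hv.2]⟩
    · intro a _ b _ h
      simpa using h
  have h3 : rk A x + (A.filter fun a => ¬ a < x).card = A.card :=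
    Finset.card_filter_add_card_filter_not _
  have hd : dcount A (x - y) = B.card := rfl
  unfold rk at *
  omega

lemma pointwise (A : Finset ℤ) (x y : ℤ) :
    dcount A (x - y) + ((rk A x - rk A y) + (rk A y - rk A x)) ≤ A.card := by
  rcases le_total y x with h | h
  · have hk := key A (x := x) (y := y)
    have hm : rk A y ≤ rk A x := rk_mono A h
    omega
  · have hk := key A (x := y) (y := x)
    have hm : rk A x ≤ rk A y := rk_mono A h
    have hsym : dcount A (x - y) = dcount A (y - x) := by
      rw [show x - y = -(y - x) by ring, dcount_neg]
    omega

lemma rk_lt_card (A : Finset ℤ) {x : ℤ} (hx : x ∈ A) : rk A x < A.card := by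
  apply card_lt_card
  rw [Finset.ssubset_iff_of_subset (filter_subset _ _)]
  exact ⟨x, hx, by simp⟩

lemma rk_injOn (A : Finset ℤ) : ∀ x ∈ A, ∀ y ∈ A, rk A x = rk A y → x = y := by
  have hlt : ∀ x ∈ A, ∀ y : ℤ, x < y → rk A x < rk A y := by
    intro x hx y hxy
    apply card_lt_card
    rw [Finset.ssubset_iff_of_subset]
    · exact ⟨x, mem_filter.2 ⟨hx, hxy⟩, by simp⟩
    · intro a ha; simp only [mem_filter] at ha ⊢; exact ⟨ha.1, lt_trans ha.2 hxy⟩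
  intro x hx y hy h
  rcases lt_trichotomy x y with hc | hc | hc
  · exact absurd h (Nat.ne_of_lt (hlt x hx y hc))
  · exact hc
  · exact absurd h.symm (Nat.ne_of_lt (hlt y hy x hc))

lemma rk_image (A : Finset ℤ) : A.image (rk A) = range A.card := by
  apply Finset.eq_of_subset_of_card_le
  · intro i hi
    simp only [mem_image] at hi
    obtain ⟨x, hx, rfl⟩ := hi
    exact mem_range.2 (rk_lt_card A hx)
  · rw [card_range, Finset.card_image_of_injOn]
    intro x hx y hy h
    exact rk_injOn A x hx y hy h

lemma gauss (n : ℕ) : 2 * (∑ i ∈ range n, i) + n = n * n := by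
  induction n with
  | zero => simp
  | succ n ih =>
    rw [sum_range_succ]
    zify at ih ⊢
    linear_combination ih

lemma sum_flip (n : ℕ) : ∑ i ∈ range n, (n - i) = (∑ i ∈ range n, i) + n := by
  have h := Finset.sum_range_reflect (fun j => n - j) n
  rw [← h]
  have h2 : ∀ j ∈ range n, n - (n - 1 - j) = j + 1 := by
    intro j hj; simp only [mem_range] at hj; omega
  rw [Finset.sum_congr rfl h2, Finset.sum_add_distrib, Finset.sum_const, card_range, smul_eq_mul,
    mul_one]

lemma distsum (n : ℕ) :
    3 * (∑ i ∈ range n, ∑ j ∈ range n, ((i - j) + (j - i))) + n = n ^ 3 := by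
  induction n with
  | zero => simp
  | succ n ih =>
    rw [sum_range_succ]
    simp only [sum_range_succ]
    rw [Finset.sum_add_distrib]
    have e1 : ∀ i ∈ range n, (i - n) + (n - i) = n - i := by
      intro i hi; simp only [mem_range] at hi; omega
    have e2 : ∀ j ∈ range n, (n - j) + (j - n) = n - j := by
      intro j hj; simp only [mem_range] at hj; omega
    rw [Finset.sum_congr rfl e1, Finset.sum_congr rfl e2, sum_flip]
    have hg := gauss n
    have hnn : (n : ℕ) - n + (n - n) = 0 := by omega
    rw [hnn]
    zify at ih hg ⊢
    linear_combination ih + 3 * hg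

lemma Tsum (n : ℕ) :
    3 * (∑ i ∈ range n, ∑ j ∈ range n, (n - ((i - j) + (j - i)))) = 2 * n ^ 3 + n := by
  have hTD : (∑ i ∈ range n, ∑ j ∈ range n, (n - ((i - j) + (j - i))))
      + (∑ i ∈ range n, ∑ j ∈ range n, ((i - j) + (j - i))) = n ^ 3 := by
    rw [← Finset.sum_add_distrib]
    have h : ∀ i ∈ range n, (∑ j ∈ range n, (n - ((i - j) + (j - i))))
        + (∑ j ∈ range n, ((i - j) + (j - i))) = n * n := by
      intro i hi
      rw [← Finset.sum_add_distrib]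
      have hpt : ∀ j ∈ range n, (n - ((i - j) + (j - i))) + ((i - j) + (j - i)) = n := by
        intro j hj; simp only [mem_range] at hi hj; omega
      rw [Finset.sum_congr rfl hpt, Finset.sum_const, card_range, smul_eq_mul, mul_comm]
    rw [Finset.sum_congr rfl h, Finset.sum_const, card_range, smul_eq_mul]
    ring
  have hD := distsum n
  nlinarith [hTD, hD]

lemma divfinal (n E T c a : ℕ) (K : ℕ) (h1 : E ≤ T) (h2 : 3 * T = 2 * c + n)
    (h3 : 3 * a + K = 2 * c + n) : E ≤ a + K / 3 := by omega

lemma hpow (n : ℕ) : 3 * n ^ 2 + (n - 1) * n * (2 * n - 1) = 2 * n ^ 3 + n := by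
  rcases n with _ | m
  · simp
  · have h1 : (m + 1) - 1 = m := by omega
    have h2 : 2 * (m + 1) - 1 = 2 * m + 1 := by omega
    rw [h1, h2]
    ring

end EnergyBoundAux

/-- For every finite set `A` of integers with `|A| = n`,
`E(A) ≤ n² + (n−1)n(2n−1)/3`.  (The division is exact.) -/
theorem energy_upper_bound (A : Finset ℤ) (n : ℕ) (hA : A.card = n) :
    addEnergy A ≤ n ^ 2 + (n - 1) * n * (2 * n - 1) / 3 := by
  classical
  subst hA
  set n := A.card with hn
  have hE : addEnergy A
      ≤ ∑ x ∈ A, ∑ y ∈ A,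
          (n - ((EnergyBoundAux.rk A x - EnergyBoundAux.rk A y)
            + (EnergyBoundAux.rk A y - EnergyBoundAux.rk A x))) := by
    rw [EnergyBoundAux.energy_eq A, Finset.sum_product]
    refine Finset.sum_le_sum fun x hx => Finset.sum_le_sum fun y hy => ?_
    have hb := EnergyBoundAux.pointwise A x y
    show EnergyBoundAux.dcount A (x - y) ≤ _
    omega
  have hre : (∑ x ∈ A, ∑ y ∈ A,
        (n - ((EnergyBoundAux.rk A x - EnergyBoundAux.rk A y)
          + (EnergyBoundAux.rk A y - EnergyBoundAux.rk A x))))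
      = ∑ i ∈ Finset.range n, ∑ j ∈ Finset.range n, (n - ((i - j) + (j - i))) := by
    have hinner : ∀ x ∈ A, (∑ y ∈ A,
          (n - ((EnergyBoundAux.rk A x - EnergyBoundAux.rk A y)
            + (EnergyBoundAux.rk A y - EnergyBoundAux.rk A x))))
        = ∑ j ∈ Finset.range n,
            (n - ((EnergyBoundAux.rk A x - j) + (j - EnergyBoundAux.rk A x))) := by
      intro x hx
      rw [← EnergyBoundAux.rk_image A, Finset.sum_image (EnergyBoundAux.rk_injOn A)]
    rw [Finset.sum_congr rfl hinner, ← EnergyBoundAux.rk_image A,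
      Finset.sum_image (EnergyBoundAux.rk_injOn A)]
  rw [hre] at hE
  exact EnergyBoundAux.divfinal n (addEnergy A) _ (n ^ 3) (n ^ 2) _ hE
    (EnergyBoundAux.Tsum n) (EnergyBoundAux.hpow n)
end

section
/- Let n ≥ 3, let A₀ = {1, 2, …, n}, and for 1 ≤ k ≤ n−2 let A₀^(k) = {1, 2, …, n−1} ∪ {n+k}. Then E(A₀) − E(A₀^(k)) = 4nk − 2k² − 6k. -/
section Helpers
open Finset

/-- Integer-valued count of additive quadruples, as a nested sum of indicators. -/
def cntZ (A : Finset ℤ) : ℤ :=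
  ∑ a ∈ A, ∑ b ∈ A, ∑ c ∈ A, ∑ d ∈ A, if a + b = c + d then (1:ℤ) else 0

lemma addEnergy_eq_cntZ (A : Finset ℤ) : (_root_.addEnergy A : ℤ) = cntZ A := by
  rw [_root_.addEnergy, cntZ, Finset.card_filter]
  push_cast
  rw [Finset.sum_product]
  simp only [Finset.sum_product]

lemma Tsymm (B : Finset ℤ) (x : ℤ) :
    (∑ a ∈ B, ∑ b ∈ B, ∑ d ∈ B, if a + b = x + d then (1:ℤ) else 0)
      = ∑ b ∈ B, ∑ c ∈ B, ∑ d ∈ B, if x + b = c + d then (1:ℤ) else 0 :=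
  calc (∑ a ∈ B, ∑ b ∈ B, ∑ d ∈ B, if a + b = x + d then (1:ℤ) else 0)
      = ∑ a ∈ B, ∑ d ∈ B, ∑ b ∈ B, if a + b = x + d then (1:ℤ) else 0 :=
        Finset.sum_congr rfl fun a _ => Finset.sum_comm
    _ = ∑ d ∈ B, ∑ a ∈ B, ∑ b ∈ B, if a + b = x + d then (1:ℤ) else 0 := Finset.sum_comm
    _ = _ := by simp only [eq_comm]

lemma cnt_insert (B : Finset ℤ) (x : ℤ) (hx : x ∉ B) :
    cntZ (insert x B) = cntZ B
      + 4 * (∑ b ∈ B, ∑ c ∈ B, ∑ d ∈ B, if x + b = c + d then (1:ℤ) else 0)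
      + 2 * (∑ c ∈ B, ∑ d ∈ B, if x + x = c + d then (1:ℤ) else 0)
      + 4 * B.card + 1 := by
  have hz1 : (∑ d ∈ B, if x + x = x + d then (1:ℤ) else 0) = 0 := by
    simp only [add_right_inj]
    rw [Finset.sum_ite_eq]
    simp [hx]
  have hz2 : (∑ c ∈ B, if x + x = c + x then (1:ℤ) else 0) = 0 := by
    simp only [add_left_inj]
    rw [Finset.sum_ite_eq]
    simp [hx]
  have hz3 : (∑ b ∈ B, if x + b = x + x then (1:ℤ) else 0) = 0 := by
    simp only [add_right_inj]
    rw [Finset.sum_ite_eq']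
    simp [hx]
  have hz4 : (∑ b ∈ B, if b + x = x + x then (1:ℤ) else 0) = 0 := by
    simp only [add_left_inj]
    rw [Finset.sum_ite_eq']
    simp [hx]
  have hD1 : (∑ b ∈ B, ∑ d ∈ B, if x + b = x + d then (1:ℤ) else 0) = B.card := by
    simp only [add_right_inj]
    rw [Finset.sum_congr rfl fun b _ => Finset.sum_ite_eq B b (fun _ => (1:ℤ))]
    simp
  have hD2 : (∑ b ∈ B, ∑ c ∈ B, if x + b = c + x then (1:ℤ) else 0) = B.card := by
    simp only [add_comm _ x, add_right_inj]
    rw [Finset.sum_congr rfl fun b _ => Finset.sum_ite_eq B b (fun _ => (1:ℤ))]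
    simp
  have hD3 : (∑ a ∈ B, ∑ d ∈ B, if a + x = x + d then (1:ℤ) else 0) = B.card := by
    simp only [add_comm _ x, add_right_inj]
    rw [Finset.sum_congr rfl fun b _ => Finset.sum_ite_eq B b (fun _ => (1:ℤ))]
    simp
  have hD4 : (∑ a ∈ B, ∑ c ∈ B, if a + x = c + x then (1:ℤ) else 0) = B.card := by
    simp only [add_left_inj]
    rw [Finset.sum_congr rfl fun b _ => Finset.sum_ite_eq B b (fun _ => (1:ℤ))]
    simp
  have hT2 : (∑ a ∈ B, ∑ c ∈ B, ∑ d ∈ B, if a + x = c + d then (1:ℤ) else 0)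
      = ∑ b ∈ B, ∑ c ∈ B, ∑ d ∈ B, if x + b = c + d then (1:ℤ) else 0 := by
    simp only [add_comm _ x]
  have hT3 : (∑ a ∈ B, ∑ b ∈ B, ∑ c ∈ B, if a + b = c + x then (1:ℤ) else 0)
      = ∑ b ∈ B, ∑ c ∈ B, ∑ d ∈ B, if x + b = c + d then (1:ℤ) else 0 := by
    rw [← Tsymm]; simp only [add_comm _ x]
  have hT4 : (∑ a ∈ B, ∑ b ∈ B, ∑ d ∈ B, if a + b = x + d then (1:ℤ) else 0)
      = ∑ b ∈ B, ∑ c ∈ B, ∑ d ∈ B, if x + b = c + d then (1:ℤ) else 0 := Tsymm B x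
  have hP2 : (∑ a ∈ B, ∑ b ∈ B, if a + b = x + x then (1:ℤ) else 0)
      = ∑ c ∈ B, ∑ d ∈ B, if x + x = c + d then (1:ℤ) else 0 := by
    simp only [eq_comm]
  unfold cntZ
  simp only [Finset.sum_insert hx, Finset.sum_add_distrib]
  rw [hz1, hz2, hz3, hz4, hD1, hD2, hD3, hD4, hT2, hT3, hT4, hP2, if_pos trivial]
  ring

lemma gauss (N : ℕ) : 2 * ∑ b ∈ Icc (1:ℤ) (N:ℤ), b = N * (N + 1) := by
  induction N with
  | zero => simp
  | succ n ih =>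
      have h1 : Icc (1:ℤ) ((n:ℕ)+1 : ℕ) = insert ((n:ℤ)+1) (Icc (1:ℤ) (n:ℤ)) := by
        ext y; simp only [mem_Icc, mem_insert]; push_cast; omega
      have h2 : ((n:ℤ)+1) ∉ Icc (1:ℤ) (n:ℤ) := by simp
      rw [h1, Finset.sum_insert h2]
      push_cast
      ring_nf
      ring_nf at ih
      omega

lemma sum_reflect (M : ℤ) : (∑ b ∈ Icc (1:ℤ) (M-1), (M - b)) = ∑ b ∈ Icc (1:ℤ) (M-1), b :=
  Finset.sum_nbij' (i := fun b => M - b) (j := fun b => M - b)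
    (fun a ha => by simp only [mem_Icc] at *; omega)
    (fun a ha => by simp only [mem_Icc] at *; omega)
    (fun a _ => by ring) (fun a _ => by ring) (fun a _ => rfl)

lemma Tval (m x : ℤ) (h1 : m + 1 ≤ x) (h2 : x ≤ 2 * m) :
    2 * (∑ b ∈ Icc (1:ℤ) m, ∑ c ∈ Icc (1:ℤ) m, ∑ d ∈ Icc (1:ℤ) m,
      if x + b = c + d then (1:ℤ) else 0) = (2*m + 1 - x) * (2*m - x) := by
  set M : ℤ := 2*m + 1 - x with hM
  have hM1 : 1 ≤ M := by omega
  have hMm : M ≤ m := by omega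
  have stepA : ∀ b ∈ Icc (1:ℤ) m,
      (∑ c ∈ Icc (1:ℤ) m, ∑ d ∈ Icc (1:ℤ) m, if x + b = c + d then (1:ℤ) else 0)
        = (((M - b).toNat : ℤ)) := by
    intro b hb
    rw [mem_Icc] at hb
    have inner : ∀ c : ℤ, (∑ d ∈ Icc (1:ℤ) m, if x + b = c + d then (1:ℤ) else 0)
        = if x + b - c ∈ Icc (1:ℤ) m then (1:ℤ) else 0 := by
      intro c
      have hcond : ∀ d : ℤ, (x + b = c + d) ↔ d = x + b - c := fun d => by omega
      simp only [hcond]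
      rw [Finset.sum_ite_eq' (Icc (1:ℤ) m) (x + b - c) (fun _ => (1:ℤ))]
    rw [Finset.sum_congr rfl (fun c _ => inner c), Finset.sum_boole]
    have hfilt : (Icc (1:ℤ) m).filter (fun c => x + b - c ∈ Icc (1:ℤ) m)
        = Icc (x + b - m) m := by
      ext c; simp only [mem_filter, mem_Icc]; omega
    rw [hfilt, Int.card_Icc]
    congr 1
    omega
  rw [Finset.sum_congr rfl stepA]
  have hsub : Icc (1:ℤ) (M-1) ⊆ Icc (1:ℤ) m := Finset.Icc_subset_Icc le_rfl (by omega)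
  rw [← Finset.sum_subset hsub (by
    intro b hb hb2
    rw [mem_Icc] at hb; rw [mem_Icc] at hb2
    have : M - b ≤ 0 := by omega
    simp [Int.toNat_of_nonpos this])]
  have : ∀ b ∈ Icc (1:ℤ) (M-1), (((M - b).toNat : ℤ)) = M - b := by
    intro b hb; rw [mem_Icc] at hb; exact Int.toNat_of_nonneg (by omega)
  rw [Finset.sum_congr rfl this, sum_reflect]
  have hN : ((M-1).toNat : ℤ) = M - 1 := Int.toNat_of_nonneg (by omega)
  have := gauss (M-1).toNat
  rw [hN] at this
  rw [this]
  ring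

end Helpers

/-- For `n ≥ 3`, `1 ≤ k ≤ n−2`, `A₀ = {1,…,n}` and `A₀⁽ᵏ⁾ = {1,…,n−1} ∪ {n+k}`, we have
`E(A₀) − E(A₀⁽ᵏ⁾) = 4nk − 2k² − 6k`. -/
theorem energy_drop (n k : ℕ) (hn : 3 ≤ n) (hk1 : 1 ≤ k) (hk2 : k ≤ n - 2) :
    (addEnergy (Finset.Icc (1 : ℤ) (n : ℤ)) : ℤ) -
        addEnergy (Finset.Icc (1 : ℤ) ((n : ℤ) - 1) ∪ {(n : ℤ) + (k : ℤ)}) =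
      4 * n * k - 2 * (k : ℤ) ^ 2 - 6 * k := by
  have hkn : (k : ℤ) ≤ (n : ℤ) - 2 := by omega
  have hk1' : (1 : ℤ) ≤ (k : ℤ) := by exact_mod_cast hk1
  have hn' : (3 : ℤ) ≤ (n : ℤ) := by exact_mod_cast hn
  have hA0 : Finset.Icc (1:ℤ) (n:ℤ) = insert (n:ℤ) (Finset.Icc (1:ℤ) ((n:ℤ)-1)) := by
    ext y; simp only [Finset.mem_Icc, Finset.mem_insert]; omega
  have hA1 : Finset.Icc (1:ℤ) ((n:ℤ)-1) ∪ {(n:ℤ)+(k:ℤ)}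
      = insert ((n:ℤ)+(k:ℤ)) (Finset.Icc (1:ℤ) ((n:ℤ)-1)) := by
    ext y; simp only [Finset.mem_union, Finset.mem_singleton, Finset.mem_insert, Finset.mem_Icc]; omega
  have hx0 : (n:ℤ) ∉ Finset.Icc (1:ℤ) ((n:ℤ)-1) := by simp only [Finset.mem_Icc]; omega
  have hxk : (n:ℤ)+(k:ℤ) ∉ Finset.Icc (1:ℤ) ((n:ℤ)-1) := by simp only [Finset.mem_Icc]; omega
  rw [hA0, hA1, addEnergy_eq_cntZ, addEnergy_eq_cntZ,
    cnt_insert _ _ hx0, cnt_insert _ _ hxk]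
  have hP0 : (∑ c ∈ Finset.Icc (1:ℤ) ((n:ℤ)-1), ∑ d ∈ Finset.Icc (1:ℤ) ((n:ℤ)-1),
      if (n:ℤ) + (n:ℤ) = c + d then (1:ℤ) else 0) = 0 := by
    apply Finset.sum_eq_zero; intro c hc
    apply Finset.sum_eq_zero; intro d hd
    rw [Finset.mem_Icc] at hc hd
    rw [if_neg]; omega
  have hPk : (∑ c ∈ Finset.Icc (1:ℤ) ((n:ℤ)-1), ∑ d ∈ Finset.Icc (1:ℤ) ((n:ℤ)-1),
      if (n:ℤ)+(k:ℤ) + ((n:ℤ)+(k:ℤ)) = c + d then (1:ℤ) else 0) = 0 := by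
    apply Finset.sum_eq_zero; intro c hc
    apply Finset.sum_eq_zero; intro d hd
    rw [Finset.mem_Icc] at hc hd
    rw [if_neg]; omega
  have hT0 := Tval ((n:ℤ)-1) (n:ℤ) (by omega) (by omega)
  have hTk := Tval ((n:ℤ)-1) ((n:ℤ)+(k:ℤ)) (by omega) (by omega)
  rw [hP0, hPk]
  linear_combination 2 * hT0 - 2 * hTk
end

section
/- Let X₀ = {x₁ < x₂ < ⋯ < x_m} be a set of positive integers that is 10-lacunary, i.e. x_{i+1}/x_i ≥ 10 for i = 1, …, m−1. For 1 ≤ k ≤ ⌊m/3⌋ define X_k = (X₀ \ {x₃, x₆, …, x_{3k}}) ∪ {x′₃, x′₆, …, x′_{3k}}, where x′_{3i} = 2x_{3i−1} − x_{3i−2}. Then for every 1 ≤ k ≤ ⌊m/3⌋, E(X_k) − E(X_{k−1}) = 4. -/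
/-- Given `x₁, …, x_m`, the set `X_k` obtained from `X₀ = {x₁, …, x_m}` by replacing
`x_{3i}` with `x′_{3i} = 2x_{3i−1} − x_{3i−2}` for `i = 1, …, k`. -/
def lacunaryModify (x : ℕ → ℤ) (m k : ℕ) : Finset ℤ :=
  ((Finset.Icc 1 m).image x \ (Finset.Icc 1 k).image fun i => x (3 * i)) ∪
    (Finset.Icc 1 k).image fun i => 2 * x (3 * i - 1) - x (3 * i - 2)

namespace LacE
open Finset

def hasT (t : ℤ) (z : (ℤ × ℤ) × ℤ × ℤ) : Prop :=
  z.1.1 = t ∨ z.1.2 = t ∨ z.2.1 = t ∨ z.2.2 = t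

instance (t : ℤ) : DecidablePred (hasT t) := fun z => by unfold hasT; infer_instance

def Quad (S : Finset ℤ) : Finset ((ℤ × ℤ) × ℤ × ℤ) :=
  ((S ×ˢ S) ×ˢ S ×ˢ S).filter fun p => p.1.1 + p.1.2 = p.2.1 + p.2.2

lemma addEnergy_eq (S : Finset ℤ) :
    (((S ×ˢ S) ×ˢ S ×ˢ S).filter fun p => p.1.1 + p.1.2 = p.2.1 + p.2.2).card
      = (Quad S).card := rfl

lemma quad_erase (S : Finset ℤ) (t : ℤ) :
    (Quad S).filter (fun z => ¬ hasT t z) = Quad (S.erase t) := by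
  ext ⟨⟨p, q⟩, r, s⟩
  simp only [Quad, mem_filter, mem_product, mem_erase]
  simp only [hasT]
  constructor
  · rintro ⟨⟨⟨⟨h1, h2⟩, h3, h4⟩, hr⟩, hn⟩
    push_neg at hn
    exact ⟨⟨⟨⟨hn.1, h1⟩, hn.2.1, h2⟩, ⟨hn.2.2.1, h3⟩, hn.2.2.2, h4⟩, hr⟩
  · rintro ⟨⟨⟨h1, h2⟩, h3, h4⟩, hr⟩
    exact ⟨⟨⟨⟨h1.2, h2.2⟩, h3.2, h4.2⟩, hr⟩, by push_neg; exact ⟨h1.1, h2.1, h3.1, h4.1⟩⟩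

lemma split_energy (S : Finset ℤ) (t : ℤ) :
    (Quad S).card = (Quad (S.erase t)).card + ((Quad S).filter (hasT t)).card := by
  have h := Finset.card_filter_add_card_filter_not (s := Quad S) (p := hasT t)
  rw [quad_erase S t] at h
  omega

def TrivQ (S : Finset ℤ) (t : ℤ) : Finset ((ℤ × ℤ) × ℤ × ℤ) :=
  ((S ×ˢ S).filter fun p => p.1 = t ∨ p.2 = t).image (fun p => (p, p)) ∪
  ((S ×ˢ S).filter fun p => p.1 = t ∨ p.2 = t).image (fun p => (p, p.swap))

lemma pairT_card (S : Finset ℤ) (t : ℤ) (ht : t ∈ S) :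
    ((S ×ˢ S).filter fun p => p.1 = t ∨ p.2 = t).card + 1 = 2 * S.card := by
  have h1 : (S ×ˢ S).filter (fun p => p.1 = t ∨ p.2 = t) = ({t} ×ˢ S) ∪ (S ×ˢ {t}) := by
    ext ⟨a, b⟩
    simp only [mem_filter, mem_product, mem_union, mem_singleton]
    constructor
    · rintro ⟨⟨ha, hb⟩, h | h⟩
      · exact Or.inl ⟨h, hb⟩
      · exact Or.inr ⟨ha, h⟩
    · rintro (⟨rfl, hb⟩ | ⟨ha, rfl⟩)
      · exact ⟨⟨ht, hb⟩, Or.inl rfl⟩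
      · exact ⟨⟨ha, ht⟩, Or.inr rfl⟩
  have h2 : ({t} ×ˢ S) ∩ (S ×ˢ {t}) = {((t : ℤ), t)} := by
    ext ⟨a, b⟩
    simp only [mem_inter, mem_product, mem_singleton, Prod.mk.injEq]
    constructor
    · rintro ⟨⟨rfl, _⟩, _, rfl⟩; exact ⟨rfl, rfl⟩
    · rintro ⟨rfl, rfl⟩; exact ⟨⟨rfl, ht⟩, ht, rfl⟩
  have h3 := Finset.card_union_add_card_inter ({t} ×ˢ S) (S ×ˢ {t})
  rw [h2] at h3
  rw [h1]
  simp only [card_product, card_singleton, one_mul, mul_one] at h3 ⊢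
  omega

lemma trivQ_card (S : Finset ℤ) (t : ℤ) (ht : t ∈ S) :
    (TrivQ S t).card + 3 = 4 * S.card := by
  classical
  set P := (S ×ˢ S).filter (fun p => p.1 = t ∨ p.2 = t) with hP
  have c1 : (P.image fun p => (p, p)).card = P.card :=
    Finset.card_image_of_injective _ (fun a b h => (Prod.mk.injEq _ _ _ _ ▸ h : _ ∧ _).1)
  have c2 : (P.image fun p => (p, p.swap)).card = P.card :=
    Finset.card_image_of_injective _ (fun a b h => (Prod.mk.injEq _ _ _ _ ▸ h : _ ∧ _).1)
  have hint : (P.image fun p => (p, p)) ∩ (P.image fun p => (p, p.swap))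
      = {(((t : ℤ), t), (t, t))} := by
    ext z
    simp only [mem_inter, mem_image, mem_singleton, hP, mem_filter, mem_product]
    constructor
    · rintro ⟨⟨⟨p1, p2⟩, ⟨⟨hp1, hp2⟩, hpt⟩, rfl⟩, ⟨⟨q1, q2⟩, ⟨⟨hq1, hq2⟩, hqt⟩, hq⟩⟩
      simp only [Prod.swap_prod_mk, Prod.mk.injEq] at hq hpt hqt ⊢
      obtain ⟨⟨e1, e2⟩, e3, e4⟩ := hq
      rcases hpt with h | h <;> refine ⟨⟨?_, ?_⟩, ?_, ?_⟩ <;> omega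
    · rintro rfl
      exact ⟨⟨(t, t), ⟨⟨ht, ht⟩, Or.inl rfl⟩, rfl⟩, ⟨(t, t), ⟨⟨ht, ht⟩, Or.inl rfl⟩, rfl⟩⟩
  have hcu := Finset.card_union_add_card_inter (P.image fun p => (p, p))
    (P.image fun p => (p, p.swap))
  rw [hint] at hcu
  have hp := pairT_card S t ht
  rw [← hP] at hp
  unfold TrivQ
  rw [← hP]
  simp only [card_singleton] at hcu
  omega

def FourQ (t u v : ℤ) : Finset ((ℤ × ℤ) × ℤ × ℤ) :=
  {((t, u), (v, v)), ((u, t), (v, v)), ((v, v), (t, u)), ((v, v), (u, t))}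

lemma fourQ_card (t u v : ℤ) (h1 : t ≠ u) (h2 : t ≠ v) (h3 : u ≠ v) :
    (FourQ t u v).card = 4 := by
  unfold FourQ
  rw [card_insert_of_notMem (by simp [Prod.ext_iff]; tauto),
      card_insert_of_notMem (by simp [Prod.ext_iff]; tauto),
      card_insert_of_notMem (by simp [Prod.ext_iff]; tauto),
      card_singleton]

lemma mem_trivQ_of (S : Finset ℤ) (t p q r s : ℤ) (hp : p ∈ S) (hq : q ∈ S)
    (h : (p, q) = (r, s) ∨ (p, q) = (s, r))
    (hct : p = t ∨ q = t ∨ r = t ∨ s = t) :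
    ((p, q), (r, s)) ∈ TrivQ S t := by
  rcases h with h | h
  · apply mem_union_left
    rw [mem_image]
    refine ⟨(p, q), mem_filter.mpr ⟨mem_product.mpr ⟨hp, hq⟩, ?_⟩, by rw [← h]⟩
    obtain ⟨h1, h2⟩ := Prod.ext_iff.mp h
    simp only at h1 h2 ⊢
    rcases hct with h' | h' | h' | h' <;> omega
  · apply mem_union_right
    rw [mem_image]
    obtain ⟨h1, h2⟩ := Prod.ext_iff.mp h
    simp only at h1 h2
    refine ⟨(p, q), mem_filter.mpr ⟨mem_product.mpr ⟨hp, hq⟩, ?_⟩, ?_⟩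
    · simp only
      rcases hct with h' | h' | h' | h' <;> omega
    · subst h1; subst h2; rfl

lemma trivQ_subset (S : Finset ℤ) (t : ℤ) :
    TrivQ S t ⊆ (Quad S).filter (hasT t) := by
  intro z hz
  simp only [TrivQ, mem_union, mem_image, mem_filter, mem_product] at hz
  simp only [Quad, hasT, mem_filter, mem_product]
  rcases hz with ⟨⟨a, b⟩, ⟨⟨⟨ha, hb⟩, habt⟩, hz'⟩⟩ | ⟨⟨a, b⟩, ⟨⟨⟨ha, hb⟩, habt⟩, hz'⟩⟩ <;>
      subst hz'
  · exact ⟨⟨⟨⟨ha, hb⟩, ha, hb⟩, rfl⟩, by simp only at habt ⊢; tauto⟩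
  · exact ⟨⟨⟨⟨ha, hb⟩, hb, ha⟩, add_comm a b⟩, by simp only at habt ⊢; tauto⟩

lemma fourQ_subset (S : Finset ℤ) (t u v : ℤ) (ht : t ∈ S) (hu : u ∈ S) (hv : v ∈ S)
    (hrel : t + u = v + v) :
    FourQ t u v ⊆ (Quad S).filter (hasT t) := by
  intro z hz
  simp only [FourQ, mem_insert, mem_singleton] at hz
  simp only [Quad, hasT, mem_filter, mem_product]
  rcases hz with rfl | rfl | rfl | rfl
  · exact ⟨⟨⟨⟨ht, hu⟩, hv, hv⟩, hrel⟩, by tauto⟩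
  · exact ⟨⟨⟨⟨hu, ht⟩, hv, hv⟩, by linarith⟩, by tauto⟩
  · exact ⟨⟨⟨⟨hv, hv⟩, ht, hu⟩, hrel.symm⟩, by tauto⟩
  · exact ⟨⟨⟨⟨hv, hv⟩, hu, ht⟩, by linarith⟩, by tauto⟩

lemma filter_eq_triv (S : Finset ℤ) (t : ℤ)
    (hS : ∀ p q r s : ℤ, p ∈ S → q ∈ S → r ∈ S → s ∈ S → p + q = r + s →
      (p = t ∨ q = t ∨ r = t ∨ s = t) → ((p, q) = (r, s) ∨ (p, q) = (s, r))) :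
    (Quad S).filter (hasT t) = TrivQ S t := by
  apply Finset.Subset.antisymm _ (trivQ_subset S t)
  intro z hz
  obtain ⟨⟨p, q⟩, r, s⟩ := z
  simp only [Quad, hasT, mem_filter, mem_product] at hz
  obtain ⟨⟨⟨⟨hp, hq⟩, hr, hs⟩, heq⟩, hct⟩ := hz
  exact mem_trivQ_of S t p q r s hp hq (hS p q r s hp hq hr hs heq hct) hct

lemma filter_eq_triv_four (S : Finset ℤ) (t u v : ℤ) (ht : t ∈ S) (hu : u ∈ S) (hv : v ∈ S)
    (hrel : t + u = v + v)
    (hS : ∀ p q r s : ℤ, p ∈ S → q ∈ S → r ∈ S → s ∈ S → p + q = r + s →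
      (p = t ∨ q = t ∨ r = t ∨ s = t) →
      (((p, q) = (r, s) ∨ (p, q) = (s, r)) ∨ ((p, q), (r, s)) ∈ FourQ t u v)) :
    (Quad S).filter (hasT t) = TrivQ S t ∪ FourQ t u v := by
  apply Finset.Subset.antisymm
  · intro z hz
    obtain ⟨⟨p, q⟩, r, s⟩ := z
    simp only [Quad, hasT, mem_filter, mem_product] at hz
    obtain ⟨⟨⟨⟨hp, hq⟩, hr, hs⟩, heq⟩, hct⟩ := hz
    rcases hS p q r s hp hq hr hs heq hct with h | h
    · exact mem_union_left _ (mem_trivQ_of S t p q r s hp hq h hct)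
    · exact mem_union_right _ h
  · exact Finset.union_subset (trivQ_subset S t) (fourQ_subset S t u v ht hu hv hrel)

lemma triv_four_disjoint (S : Finset ℤ) (t u v : ℤ) (h2 : t ≠ v) (h3 : u ≠ v) :
    Disjoint (TrivQ S t) (FourQ t u v) := by
  rw [Finset.disjoint_right]
  intro z hzF hzT
  simp only [FourQ, mem_insert, mem_singleton] at hzF
  simp only [TrivQ, mem_union, mem_image, mem_filter, mem_product] at hzT
  rcases hzF with rfl | rfl | rfl | rfl <;>
    rcases hzT with ⟨⟨a, b⟩, _, hp⟩ | ⟨⟨a, b⟩, _, hp⟩ <;>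
      simp only [Prod.swap_prod_mk, Prod.mk.injEq] at hp <;>
      obtain ⟨⟨e1, e2⟩, e3, e4⟩ := hp <;> omega

lemma energy_step (A B : Finset ℤ) (t u v y : ℤ)
    (hBeq : B = insert t (A.erase y))
    (hy : y ∈ A) (htA : t ∉ A)
    (hu : u ∈ A.erase y) (hv : v ∈ A.erase y)
    (hrel : t + u = v + v) (h1 : t ≠ u) (h2 : t ≠ v) (h3 : u ≠ v)
    (hA : ∀ p q r s : ℤ, p ∈ A → q ∈ A → r ∈ A → s ∈ A → p + q = r + s →
      (p = y ∨ q = y ∨ r = y ∨ s = y) → ((p, q) = (r, s) ∨ (p, q) = (s, r)))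
    (hB : ∀ p q r s : ℤ, p ∈ B → q ∈ B → r ∈ B → s ∈ B → p + q = r + s →
      (p = t ∨ q = t ∨ r = t ∨ s = t) →
      (((p, q) = (r, s) ∨ (p, q) = (s, r)) ∨ ((p, q), (r, s)) ∈ FourQ t u v)) :
    (Quad B).card = (Quad A).card + 4 := by
  have htAe : t ∉ A.erase y := fun h => htA (mem_of_mem_erase h)
  have htB : t ∈ B := hBeq ▸ mem_insert_self _ _
  have huB : u ∈ B := hBeq ▸ mem_insert_of_mem hu
  have hvB : v ∈ B := hBeq ▸ mem_insert_of_mem hv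
  have hBe : B.erase t = A.erase y := by rw [hBeq, erase_insert htAe]
  have e1 := split_energy A y
  have e2 := split_energy B t
  have f1 : (Quad A).filter (hasT y) = TrivQ A y := filter_eq_triv A y hA
  have f2 : (Quad B).filter (hasT t) = TrivQ B t ∪ FourQ t u v :=
    filter_eq_triv_four B t u v htB huB hvB hrel hB
  have c1 := trivQ_card A y hy
  have c2 := trivQ_card B t htB
  have c4 := fourQ_card t u v h1 h2 h3
  have cd := Finset.card_union_of_disjoint (triv_four_disjoint B t u v h2 h3)
  have cB : B.card = A.card := by
    rw [hBeq, card_insert_of_notMem htAe, card_erase_of_mem hy]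
    have : 0 < A.card := card_pos.mpr ⟨y, hy⟩
    omega
  rw [hBe] at e2
  rw [f1] at e1
  rw [f2, cd] at e2
  omega

open Finset

section XStruct

variable {m : ℕ} {x : ℕ → ℤ}
variable (hpos : ∀ i, 1 ≤ i → i ≤ m → 0 < x i)
variable (hlac : ∀ i, 1 ≤ i → i + 1 ≤ m → 10 * x i ≤ x (i + 1))

include hpos hlac

lemma xle : ∀ j i, 1 ≤ i → i ≤ j → j ≤ m → x i ≤ x j := by
  intro j
  induction j with
  | zero => intro i h1 h2 _; omega
  | succ n ih =>
    intro i h1 h2 hm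
    rcases Nat.lt_or_ge i (n + 1) with h | h
    · have h0 : 1 ≤ n := by omega
      have hx1 := ih i h1 (by omega) (by omega)
      have hx2 := hlac n h0 hm
      have hx3 := hpos n h0 (by omega)
      linarith
    · have : i = n + 1 := by omega
      rw [this]

lemma xlt : ∀ i j, 1 ≤ i → i < j → j ≤ m → x i < x j := by
  intro i j h1 h2 hm
  obtain ⟨n, rfl⟩ : ∃ n, j = n + 1 := ⟨j - 1, by omega⟩
  have hx1 := xle hpos hlac n i h1 (by omega) (by omega)
  have hx2 := hlac n (by omega) hm
  have hx3 := hpos n (by omega) (by omega)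
  linarith

lemma xinj : ∀ i j, 1 ≤ i → i ≤ m → 1 ≤ j → j ≤ m → x i = x j → i = j := by
  intro i j hi1 hi2 hj1 hj2 he
  by_contra hne
  rcases Nat.lt_or_ge i j with h | h
  · have := xlt hpos hlac i j hi1 h hj2; omega
  · have := xlt hpos hlac j i hj1 (by omega) hi2; omega

lemma sumbound : ∀ J, 1 ≤ J → J ≤ m → 9 * (∑ j ∈ Icc 1 J, x j) ≤ 10 * x J := by
  intro J
  induction J with
  | zero => intro h; omega
  | succ n ih =>
    intro h1 hm
    rcases Nat.eq_zero_or_pos n with rfl | hn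
    · simp only [Finset.Icc_self, Finset.sum_singleton]
      have := hpos 1 le_rfl hm
      linarith
    · rw [Finset.sum_Icc_succ_top (by omega : 1 ≤ n + 1)]
      have ihn := ih (by omega) (by omega)
      have hl := hlac n (by omega) hm
      linarith

lemma indep (c : ℕ → ℤ) (hb : ∀ j, |c j| ≤ 8)
    (h0 : ∑ j ∈ Icc 1 m, c j * x j = 0) : ∀ j ∈ Icc 1 m, c j = 0 := by
  suffices H : ∀ M, M ≤ m → (∑ j ∈ Icc 1 M, c j * x j) = 0 → ∀ j ∈ Icc 1 M, c j = 0 by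
    exact H m le_rfl h0
  intro M
  induction M with
  | zero => intro _ _ j hj; simp only [Finset.mem_Icc] at hj; omega
  | succ n ih =>
    intro hm hs j hj
    rw [Finset.sum_Icc_succ_top (by omega : 1 ≤ n + 1)] at hs
    have hzero : c (n + 1) = 0 := by
      rcases Nat.eq_zero_or_pos n with rfl | hn
      · rw [show Finset.Icc 1 0 = (∅ : Finset ℕ) from rfl, Finset.sum_empty, zero_add] at hs
        have hx := hpos 1 le_rfl hm
        rcases mul_eq_zero.mp hs with h | h
        · exact h
        · rw [h] at hx; exact absurd hx (lt_irrefl 0)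
      · by_contra hne
        have habs : |∑ j ∈ Icc 1 n, c j * x j| ≤ 8 * ∑ j ∈ Icc 1 n, x j := by
          calc |∑ j ∈ Icc 1 n, c j * x j| ≤ ∑ j ∈ Icc 1 n, |c j * x j| :=
                Finset.abs_sum_le_sum_abs _ _
            _ ≤ ∑ j ∈ Icc 1 n, 8 * x j := by
                apply Finset.sum_le_sum
                intro i hi
                simp only [Finset.mem_Icc] at hi
                have hxi := hpos i hi.1 (by omega)
                rw [abs_mul, abs_of_pos hxi]
                exact mul_le_mul_of_nonneg_right (hb i) (le_of_lt hxi)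
            _ = 8 * ∑ j ∈ Icc 1 n, x j := (Finset.mul_sum _ _ _).symm
        have hsb := sumbound hpos hlac n (by omega) (by omega)
        have hl := hlac n (by omega) hm
        have hx1 : 0 < x (n + 1) := hpos (n + 1) (by omega) hm
        have hc1 : 1 ≤ |c (n + 1)| := Int.one_le_abs hne
        have hlow : x (n + 1) ≤ |∑ j ∈ Icc 1 n, c j * x j| := by
          have : ∑ j ∈ Icc 1 n, c j * x j = -(c (n + 1) * x (n + 1)) := by linarith
          rw [this, abs_neg, abs_mul, abs_of_pos hx1]
          nlinarith
        -- 9 * x(n+1) ≤ 9 * |low| ≤ 72 * Σ ≤ 8 * 10 x n ≤ 8 * x (n+1)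
        have habs' : 0 ≤ ∑ j ∈ Icc 1 n, x j := by
          apply Finset.sum_nonneg
          intro i hi
          simp only [Finset.mem_Icc] at hi
          exact le_of_lt (hpos i hi.1 (by omega))
        linarith
    rw [hzero, zero_mul, add_zero] at hs
    simp only [Finset.mem_Icc] at hj
    rcases Nat.lt_or_ge j (n + 1) with h | h
    · exact ih (by omega) hs j (Finset.mem_Icc.mpr ⟨hj.1, by omega⟩)
    · have hjn : j = n + 1 := by omega
      rw [hjn]; exact hzero
end XStruct

def cE (a : ℕ) : ℕ → ℤ := fun j => if j = a then 1 else 0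
def cF (i : ℕ) : ℕ → ℤ := fun j => 2 * cE (3 * i - 1) j - cE (3 * i - 2) j

lemma cE_abs (a j : ℕ) : |cE a j| ≤ 2 := by
  unfold cE; split_ifs <;> norm_num

lemma cF_abs (i j : ℕ) : |cF i j| ≤ 2 := by
  unfold cF cE; split_ifs <;> norm_num

lemma cF_eval1 (i t : ℕ) (hi : 1 ≤ i) (ht : 1 ≤ t) :
    cF i (3 * t - 1) = if t = i then 2 else 0 := by
  unfold cF cE
  rcases eq_or_ne t i with rfl | h
  · rw [if_pos rfl, if_neg (by omega), if_pos rfl]; ring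
  · rw [if_neg (by omega), if_neg (by omega), if_neg h]; ring

lemma cF_eval2 (i t : ℕ) (hi : 1 ≤ i) (ht : 1 ≤ t) :
    cF i (3 * t - 2) = if t = i then -1 else 0 := by
  unfold cF cE
  rcases eq_or_ne t i with rfl | h
  · rw [if_neg (by omega), if_pos rfl, if_pos rfl]; ring
  · rw [if_neg (by omega), if_neg (by omega), if_neg h]; ring

section Coef

variable {m : ℕ} {x : ℕ → ℤ}
variable (hpos : ∀ i, 1 ≤ i → i ≤ m → 0 < x i)
variable (hlac : ∀ i, 1 ≤ i → i + 1 ≤ m → 10 * x i ≤ x (i + 1))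

lemma sum_cE (a : ℕ) (ha : a ∈ Icc 1 m) : ∑ j ∈ Icc 1 m, cE a j * x j = x a := by
  unfold cE
  simp only [ite_mul, one_mul, zero_mul]
  rw [Finset.sum_ite_eq' (Icc 1 m) a x, if_pos ha]

lemma sum_cF (i : ℕ) (hi : 1 ≤ i) (h3 : 3 * i ≤ m) :
    ∑ j ∈ Icc 1 m, cF i j * x j = 2 * x (3 * i - 1) - x (3 * i - 2) := by
  unfold cF
  simp only [sub_mul, mul_assoc]
  rw [Finset.sum_sub_distrib, ← Finset.mul_sum,
    sum_cE (3 * i - 1) (Finset.mem_Icc.mpr ⟨by omega, by omega⟩),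
    sum_cE (3 * i - 2) (Finset.mem_Icc.mpr ⟨by omega, by omega⟩)]

include hpos hlac

lemma four_rel (c₁ c₂ c₃ c₄ : ℕ → ℤ)
    (h₁ : ∀ j, |c₁ j| ≤ 2) (h₂ : ∀ j, |c₂ j| ≤ 2)
    (h₃ : ∀ j, |c₃ j| ≤ 2) (h₄ : ∀ j, |c₄ j| ≤ 2)
    (hs : (∑ j ∈ Icc 1 m, c₁ j * x j) + (∑ j ∈ Icc 1 m, c₂ j * x j)
        = (∑ j ∈ Icc 1 m, c₃ j * x j) + (∑ j ∈ Icc 1 m, c₄ j * x j)) :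
    ∀ j ∈ Icc 1 m, c₁ j + c₂ j = c₃ j + c₄ j := by
  intro j hj
  have key := indep hpos hlac (fun j => c₁ j + c₂ j - c₃ j - c₄ j)
    (fun j => by
      have a1 := abs_le.mp (h₁ j); have a2 := abs_le.mp (h₂ j)
      have a3 := abs_le.mp (h₃ j); have a4 := abs_le.mp (h₄ j)
      rw [abs_le]
      constructor
      · show (-8:ℤ) ≤ c₁ j + c₂ j - c₃ j - c₄ j; linarith
      · show c₁ j + c₂ j - c₃ j - c₄ j ≤ 8; linarith)
    (by
      simp only [sub_mul, add_mul]
      rw [Finset.sum_sub_distrib, Finset.sum_sub_distrib, Finset.sum_add_distrib]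
      linarith)
    j hj
  have key' : c₁ j + c₂ j - c₃ j - c₄ j = 0 := key
  linarith

end Coef

section Cores

variable {m : ℕ}

lemma idx_EEEE (a b c d : ℕ) (ha1 : 1 ≤ a) (ha2 : a ≤ m) (hb1 : 1 ≤ b) (hb2 : b ≤ m)
    (h : ∀ j ∈ Icc 1 m, cE a j + cE b j = cE c j + cE d j) :
    (a = c ∧ b = d) ∨ (a = d ∧ b = c) := by
  have h1 := h a (Finset.mem_Icc.mpr ⟨ha1, ha2⟩)
  have h2 := h b (Finset.mem_Icc.mpr ⟨hb1, hb2⟩)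
  simp only [cE] at h1 h2
  split_ifs at h1 h2 <;> omega

lemma idx_FEEE (i a c d : ℕ) (hi : 1 ≤ i) (h3 : 3 * i ≤ m)
    (h : ∀ j ∈ Icc 1 m, cF i j + cE a j = cE c j + cE d j) :
    a = 3 * i - 2 ∧ c = 3 * i - 1 ∧ d = 3 * i - 1 := by
  have h1 := h (3 * i - 1) (Finset.mem_Icc.mpr ⟨by omega, by omega⟩)
  have h2 := h (3 * i - 2) (Finset.mem_Icc.mpr ⟨by omega, by omega⟩)
  rw [cF_eval1 i i hi hi] at h1
  rw [cF_eval2 i i hi hi] at h2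
  simp only [cE] at h1 h2
  split_ifs at h1 h2 <;> omega

lemma idx_FFEE (i j c d : ℕ) (hi : 1 ≤ i) (hj : 1 ≤ j) (h3 : 3 * i ≤ m)
    (h : ∀ t ∈ Icc 1 m, cF i t + cF j t = cE c t + cE d t) : False := by
  have h1 := h (3 * i - 2) (Finset.mem_Icc.mpr ⟨by omega, by omega⟩)
  rw [cF_eval2 i i hi hi, cF_eval2 j i hj hi] at h1
  simp only [cE] at h1
  split_ifs at h1 <;> omega

lemma idx_FEFE (i a j b : ℕ) (hi : 1 ≤ i) (hj : 1 ≤ j) (ha1 : 1 ≤ a) (ha2 : a ≤ m)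
    (h3 : 3 * i ≤ m)
    (h : ∀ t ∈ Icc 1 m, cF i t + cE a t = cF j t + cE b t) :
    i = j ∧ a = b := by
  have h1 := h (3 * i - 1) (Finset.mem_Icc.mpr ⟨by omega, by omega⟩)
  rw [cF_eval1 i i hi hi, cF_eval1 j i hj hi] at h1
  simp only [cE] at h1
  have hij : i = j := by split_ifs at h1 <;> omega
  subst hij
  refine ⟨rfl, ?_⟩
  have h2 := h a (Finset.mem_Icc.mpr ⟨ha1, ha2⟩)
  simp only [cF, cE] at h2
  split_ifs at h2 <;> omega

lemma idx_FFFE (i j l d : ℕ) (hi : 1 ≤ i) (hj : 1 ≤ j) (hl : 1 ≤ l)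
    (h3i : 3 * i ≤ m) (h3j : 3 * j ≤ m)
    (h : ∀ t ∈ Icc 1 m, cF i t + cF j t = cF l t + cE d t) : False := by
  have h1 := h (3 * i - 2) (Finset.mem_Icc.mpr ⟨by omega, by omega⟩)
  have h2 := h (3 * j - 2) (Finset.mem_Icc.mpr ⟨by omega, by omega⟩)
  rw [cF_eval2 i i hi hi, cF_eval2 j i hj hi, cF_eval2 l i hl hi] at h1
  rw [cF_eval2 i j hi hj, cF_eval2 j j hj hj, cF_eval2 l j hl hj] at h2
  simp only [cE] at h1 h2
  split_ifs at h1 h2 <;> omega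

lemma idx_FFFF (i j l p : ℕ) (hi : 1 ≤ i) (hj : 1 ≤ j) (hl : 1 ≤ l) (hp : 1 ≤ p)
    (h3i : 3 * i ≤ m) (h3j : 3 * j ≤ m)
    (h : ∀ t ∈ Icc 1 m, cF i t + cF j t = cF l t + cF p t) :
    (i = l ∧ j = p) ∨ (i = p ∧ j = l) := by
  have h1 := h (3 * i - 1) (Finset.mem_Icc.mpr ⟨by omega, by omega⟩)
  have h2 := h (3 * j - 1) (Finset.mem_Icc.mpr ⟨by omega, by omega⟩)
  rw [cF_eval1 i i hi hi, cF_eval1 j i hj hi, cF_eval1 l i hl hi, cF_eval1 p i hp hi] at h1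
  rw [cF_eval1 i j hi hj, cF_eval1 j j hj hj, cF_eval1 l j hl hj, cF_eval1 p j hp hj] at h2
  split_ifs at h1 h2 <;> omega

end Cores

section Class

variable {m : ℕ} {x : ℕ → ℤ}
variable (hpos : ∀ i, 1 ≤ i → i ≤ m → 0 < x i)
variable (hlac : ∀ i, 1 ≤ i → i + 1 ≤ m → 10 * x i ≤ x (i + 1))

include hpos hlac

lemma mem_lm (k' : ℕ) (hk : 3 * k' ≤ m) (u : ℤ) :
    u ∈ lacunaryModify x m k' ↔
      (∃ j, 1 ≤ j ∧ j ≤ m ∧ (∀ i, 1 ≤ i → i ≤ k' → j ≠ 3 * i) ∧ u = x j) ∨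
      (∃ i, 1 ≤ i ∧ i ≤ k' ∧ u = 2 * x (3 * i - 1) - x (3 * i - 2)) := by
  unfold lacunaryModify
  simp only [mem_union, mem_sdiff, mem_image, Finset.mem_Icc]
  constructor
  · rintro (⟨⟨j, ⟨hj1, hj2⟩, rfl⟩, hni⟩ | ⟨i, ⟨hi1, hi2⟩, rfl⟩)
    · left
      refine ⟨j, hj1, hj2, ?_, rfl⟩
      intro i h1 h2 hji
      exact hni ⟨i, ⟨h1, h2⟩, by rw [hji]⟩
    · right; exact ⟨i, hi1, hi2, rfl⟩
  · rintro (⟨j, hj1, hj2, hni, rfl⟩ | ⟨i, hi1, hi2, rfl⟩)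
    · left
      refine ⟨⟨j, ⟨hj1, hj2⟩, rfl⟩, ?_⟩
      rintro ⟨i, ⟨h1, h2⟩, hxi⟩
      exact hni i h1 h2 (xinj hpos hlac j (3 * i) hj1 hj2 (by omega) (by omega) hxi.symm)
    · right; exact ⟨i, ⟨hi1, hi2⟩, rfl⟩

lemma f_bounds (i : ℕ) (hi : 1 ≤ i) (h3 : 3 * i ≤ m) :
    x (3 * i - 1) < 2 * x (3 * i - 1) - x (3 * i - 2) ∧
      2 * x (3 * i - 1) - x (3 * i - 2) < x (3 * i) := by
  have h1 : x (3 * i - 2) < x (3 * i - 1) :=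
    xlt hpos hlac (3 * i - 2) (3 * i - 1) (by omega) (by omega) (by omega)
  have h2 : 10 * x (3 * i - 1) ≤ x (3 * i) := by
    have h := hlac (3 * i - 1) (by omega) (by omega)
    rwa [show 3 * i - 1 + 1 = 3 * i by omega] at h
  have h0 : 0 < x (3 * i - 2) := hpos (3 * i - 2) (by omega) (by omega)
  constructor <;> linarith

/-- full classification of additive quadruples in `X_{k'}` -/
lemma quad_class (k' : ℕ) (hk : 3 * k' ≤ m) (p q r s : ℤ)
    (hp : p ∈ lacunaryModify x m k') (hq : q ∈ lacunaryModify x m k')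
    (hr : r ∈ lacunaryModify x m k') (hs : s ∈ lacunaryModify x m k')
    (h : p + q = r + s) :
    (p = r ∧ q = s) ∨ (p = s ∧ q = r) ∨
      (∃ i, 1 ≤ i ∧ i ≤ k' ∧ r = x (3 * i - 1) ∧ s = x (3 * i - 1) ∧
        ((p = 2 * x (3 * i - 1) - x (3 * i - 2) ∧ q = x (3 * i - 2)) ∨
         (p = x (3 * i - 2) ∧ q = 2 * x (3 * i - 1) - x (3 * i - 2)))) ∨
      (∃ i, 1 ≤ i ∧ i ≤ k' ∧ p = x (3 * i - 1) ∧ q = x (3 * i - 1) ∧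
        ((r = 2 * x (3 * i - 1) - x (3 * i - 2) ∧ s = x (3 * i - 2)) ∨
         (r = x (3 * i - 2) ∧ s = 2 * x (3 * i - 1) - x (3 * i - 2)))) := by
  have memE : ∀ a : ℕ, 1 ≤ a → a ≤ m → a ∈ Icc 1 m := fun a h1 h2 => Finset.mem_Icc.mpr ⟨h1, h2⟩
  rw [mem_lm hpos hlac k' hk] at hp hq hr hs
  rcases hp with ⟨a, ha1, ha2, -, rfl⟩ | ⟨i, hi1, hi2, rfl⟩ <;>
    rcases hq with ⟨b, hb1, hb2, -, rfl⟩ | ⟨j, hj1, hj2, rfl⟩ <;>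
      rcases hr with ⟨c, hc1, hc2, -, rfl⟩ | ⟨l, hl1, hl2, rfl⟩ <;>
        rcases hs with ⟨d, hd1, hd2, -, rfl⟩ | ⟨o, ho1, ho2, rfl⟩
  -- 1 : EEEE
  · have key := four_rel hpos hlac (cE a) (cE b) (cE c) (cE d)
      (cE_abs a) (cE_abs b) (cE_abs c) (cE_abs d)
      (by rw [sum_cE a (memE a ha1 ha2), sum_cE b (memE b hb1 hb2),
              sum_cE c (memE c hc1 hc2), sum_cE d (memE d hd1 hd2)]; linarith)
    rcases idx_EEEE a b c d ha1 ha2 hb1 hb2 key with ⟨h1, h2⟩ | ⟨h1, h2⟩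
    · exact Or.inl ⟨by rw [h1], by rw [h2]⟩
    · exact Or.inr (Or.inl ⟨by rw [h1], by rw [h2]⟩)
  -- 2 : EEEF
  · have key := four_rel hpos hlac (cF o) (cE c) (cE a) (cE b)
      (cF_abs o) (cE_abs c) (cE_abs a) (cE_abs b)
      (by rw [sum_cF o ho1 (by omega), sum_cE c (memE c hc1 hc2),
              sum_cE a (memE a ha1 ha2), sum_cE b (memE b hb1 hb2)]; linarith)
    obtain ⟨h1, h2, h3⟩ := idx_FEEE o c a b ho1 (by omega) key
    exact Or.inr (Or.inr (Or.inr ⟨o, ho1, ho2, by rw [h2], by rw [h3],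
      Or.inr ⟨by rw [h1], rfl⟩⟩))
  -- 3 : EEFE
  · have key := four_rel hpos hlac (cF l) (cE d) (cE a) (cE b)
      (cF_abs l) (cE_abs d) (cE_abs a) (cE_abs b)
      (by rw [sum_cF l hl1 (by omega), sum_cE d (memE d hd1 hd2),
              sum_cE a (memE a ha1 ha2), sum_cE b (memE b hb1 hb2)]; linarith)
    obtain ⟨h1, h2, h3⟩ := idx_FEEE l d a b hl1 (by omega) key
    exact Or.inr (Or.inr (Or.inr ⟨l, hl1, hl2, by rw [h2], by rw [h3],
      Or.inl ⟨rfl, by rw [h1]⟩⟩))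
  -- 4 : EEFF
  · exact absurd (four_rel hpos hlac (cF l) (cF o) (cE a) (cE b)
      (cF_abs l) (cF_abs o) (cE_abs a) (cE_abs b)
      (by rw [sum_cF l hl1 (by omega), sum_cF o ho1 (by omega),
              sum_cE a (memE a ha1 ha2), sum_cE b (memE b hb1 hb2)]; linarith))
      (fun key => idx_FFEE l o a b hl1 ho1 (by omega) key)
  -- 5 : EFEE
  · have key := four_rel hpos hlac (cF j) (cE a) (cE c) (cE d)
      (cF_abs j) (cE_abs a) (cE_abs c) (cE_abs d)
      (by rw [sum_cF j hj1 (by omega), sum_cE a (memE a ha1 ha2),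
              sum_cE c (memE c hc1 hc2), sum_cE d (memE d hd1 hd2)]; linarith)
    obtain ⟨h1, h2, h3⟩ := idx_FEEE j a c d hj1 (by omega) key
    exact Or.inr (Or.inr (Or.inl ⟨j, hj1, hj2, by rw [h2], by rw [h3],
      Or.inr ⟨by rw [h1], rfl⟩⟩))
  -- 6 : EFEF
  · have key := four_rel hpos hlac (cF j) (cE a) (cF o) (cE c)
      (cF_abs j) (cE_abs a) (cF_abs o) (cE_abs c)
      (by rw [sum_cF j hj1 (by omega), sum_cE a (memE a ha1 ha2),
              sum_cF o ho1 (by omega), sum_cE c (memE c hc1 hc2)]; linarith)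
    obtain ⟨h1, h2⟩ := idx_FEFE j a o c hj1 ho1 ha1 ha2 (by omega) key
    exact Or.inl ⟨by rw [h2], by rw [h1]⟩
  -- 7 : EFFE
  · have key := four_rel hpos hlac (cF j) (cE a) (cF l) (cE d)
      (cF_abs j) (cE_abs a) (cF_abs l) (cE_abs d)
      (by rw [sum_cF j hj1 (by omega), sum_cE a (memE a ha1 ha2),
              sum_cF l hl1 (by omega), sum_cE d (memE d hd1 hd2)]; linarith)
    obtain ⟨h1, h2⟩ := idx_FEFE j a l d hj1 hl1 ha1 ha2 (by omega) key
    exact Or.inr (Or.inl ⟨by rw [h2], by rw [h1]⟩)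
  -- 8 : EFFF
  · exact absurd (four_rel hpos hlac (cF l) (cF o) (cF j) (cE a)
      (cF_abs l) (cF_abs o) (cF_abs j) (cE_abs a)
      (by rw [sum_cF l hl1 (by omega), sum_cF o ho1 (by omega),
              sum_cF j hj1 (by omega), sum_cE a (memE a ha1 ha2)]; linarith))
      (fun key => idx_FFFE l o j a hl1 ho1 hj1 (by omega) (by omega) key)
  -- 9 : FEEE
  · have key := four_rel hpos hlac (cF i) (cE b) (cE c) (cE d)
      (cF_abs i) (cE_abs b) (cE_abs c) (cE_abs d)
      (by rw [sum_cF i hi1 (by omega), sum_cE b (memE b hb1 hb2),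
              sum_cE c (memE c hc1 hc2), sum_cE d (memE d hd1 hd2)]; linarith)
    obtain ⟨h1, h2, h3⟩ := idx_FEEE i b c d hi1 (by omega) key
    exact Or.inr (Or.inr (Or.inl ⟨i, hi1, hi2, by rw [h2], by rw [h3],
      Or.inl ⟨rfl, by rw [h1]⟩⟩))
  -- 10 : FEEF
  · have key := four_rel hpos hlac (cF i) (cE b) (cF o) (cE c)
      (cF_abs i) (cE_abs b) (cF_abs o) (cE_abs c)
      (by rw [sum_cF i hi1 (by omega), sum_cE b (memE b hb1 hb2),
              sum_cF o ho1 (by omega), sum_cE c (memE c hc1 hc2)]; linarith)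
    obtain ⟨h1, h2⟩ := idx_FEFE i b o c hi1 ho1 hb1 hb2 (by omega) key
    exact Or.inr (Or.inl ⟨by rw [h1], by rw [h2]⟩)
  -- 11 : FEFE
  · have key := four_rel hpos hlac (cF i) (cE b) (cF l) (cE d)
      (cF_abs i) (cE_abs b) (cF_abs l) (cE_abs d)
      (by rw [sum_cF i hi1 (by omega), sum_cE b (memE b hb1 hb2),
              sum_cF l hl1 (by omega), sum_cE d (memE d hd1 hd2)]; linarith)
    obtain ⟨h1, h2⟩ := idx_FEFE i b l d hi1 hl1 hb1 hb2 (by omega) key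
    exact Or.inl ⟨by rw [h1], by rw [h2]⟩
  -- 12 : FEFF
  · exact absurd (four_rel hpos hlac (cF l) (cF o) (cF i) (cE b)
      (cF_abs l) (cF_abs o) (cF_abs i) (cE_abs b)
      (by rw [sum_cF l hl1 (by omega), sum_cF o ho1 (by omega),
              sum_cF i hi1 (by omega), sum_cE b (memE b hb1 hb2)]; linarith))
      (fun key => idx_FFFE l o i b hl1 ho1 hi1 (by omega) (by omega) key)
  -- 13 : FFEE
  · exact absurd (four_rel hpos hlac (cF i) (cF j) (cE c) (cE d)
      (cF_abs i) (cF_abs j) (cE_abs c) (cE_abs d)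
      (by rw [sum_cF i hi1 (by omega), sum_cF j hj1 (by omega),
              sum_cE c (memE c hc1 hc2), sum_cE d (memE d hd1 hd2)]; linarith))
      (fun key => idx_FFEE i j c d hi1 hj1 (by omega) key)
  -- 14 : FFEF
  · exact absurd (four_rel hpos hlac (cF i) (cF j) (cF o) (cE c)
      (cF_abs i) (cF_abs j) (cF_abs o) (cE_abs c)
      (by rw [sum_cF i hi1 (by omega), sum_cF j hj1 (by omega),
              sum_cF o ho1 (by omega), sum_cE c (memE c hc1 hc2)]; linarith))
      (fun key => idx_FFFE i j o c hi1 hj1 ho1 (by omega) (by omega) key)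
  -- 15 : FFFE
  · exact absurd (four_rel hpos hlac (cF i) (cF j) (cF l) (cE d)
      (cF_abs i) (cF_abs j) (cF_abs l) (cE_abs d)
      (by rw [sum_cF i hi1 (by omega), sum_cF j hj1 (by omega),
              sum_cF l hl1 (by omega), sum_cE d (memE d hd1 hd2)]; linarith))
      (fun key => idx_FFFE i j l d hi1 hj1 hl1 (by omega) (by omega) key)
  -- 16 : FFFF
  · have key := four_rel hpos hlac (cF i) (cF j) (cF l) (cF o)
      (cF_abs i) (cF_abs j) (cF_abs l) (cF_abs o)
      (by rw [sum_cF i hi1 (by omega), sum_cF j hj1 (by omega),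
              sum_cF l hl1 (by omega), sum_cF o ho1 (by omega)]; linarith)
    rcases idx_FFFF i j l o hi1 hj1 hl1 ho1 (by omega) (by omega) key with ⟨h1, h2⟩ | ⟨h1, h2⟩
    · exact Or.inl ⟨by rw [h1], by rw [h2]⟩
    · exact Or.inr (Or.inl ⟨by rw [h1], by rw [h2]⟩)

end Class

end LacE

open LacE in
/-- If `x₁ < x₂ < ⋯ < x_m` are positive integers with `x_{i+1}/x_i ≥ 10`, then replacing
`x_{3i}` by `2x_{3i−1} − x_{3i−2}` for `i = 1, …, k` (with `1 ≤ k ≤ ⌊m/3⌋`) increases the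
additive energy by exactly `4` at each step:  `E(X_k) − E(X_{k−1}) = 4`. -/
theorem energy_lacunary_steps (m : ℕ) (x : ℕ → ℤ)
    (hpos : ∀ i, 1 ≤ i → i ≤ m → 0 < x i)
    (hlac : ∀ i, 1 ≤ i → i + 1 ≤ m → 10 * x i ≤ x (i + 1)) :
    ∀ k, 1 ≤ k → k ≤ m / 3 →
      addEnergy (lacunaryModify x m k) = addEnergy (lacunaryModify x m (k - 1)) + 4 := by
  intro k hk1 hk3
  have hm : 3 * k ≤ m := by omega
  have hm' : 3 * (k - 1) ≤ m := by omega
  have hfb := f_bounds hpos hlac k hk1 hm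
  have huv : x (3 * k - 2) < x (3 * k - 1) :=
    xlt hpos hlac _ _ (by omega) (by omega) (by omega)
  have hvy : x (3 * k - 1) < x (3 * k) := xlt hpos hlac _ _ (by omega) (by omega) hm
  have hyA : x (3 * k) ∈ lacunaryModify x m (k - 1) :=
    (mem_lm hpos hlac (k - 1) hm' _).mpr
      (Or.inl ⟨3 * k, by omega, by omega, fun i h1 h2 => by omega, rfl⟩)
  have huA : x (3 * k - 2) ∈ lacunaryModify x m (k - 1) :=
    (mem_lm hpos hlac (k - 1) hm' _).mpr
      (Or.inl ⟨3 * k - 2, by omega, by omega, fun i h1 h2 => by omega, rfl⟩)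
  have hvA : x (3 * k - 1) ∈ lacunaryModify x m (k - 1) :=
    (mem_lm hpos hlac (k - 1) hm' _).mpr
      (Or.inl ⟨3 * k - 1, by omega, by omega, fun i h1 h2 => by omega, rfl⟩)
  have hy'A : (2 * x (3 * k - 1) - x (3 * k - 2)) ∉ lacunaryModify x m (k - 1) := by
    intro hmem
    rcases (mem_lm hpos hlac (k - 1) hm' _).mp hmem with
      ⟨j, hj1, hj2, _, hj⟩ | ⟨i, hi1, hi2, hieq⟩
    · rcases Nat.lt_or_ge j (3 * k) with h | h
      · have hle : x j ≤ x (3 * k - 1) := xle hpos hlac (3 * k - 1) j hj1 (by omega) (by omega)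
        linarith [hfb.1]
      · have hle : x (3 * k) ≤ x j := xle hpos hlac j (3 * k) (by omega) h hj2
        linarith [hfb.2]
    · have hfi := f_bounds hpos hlac i hi1 (by omega)
      have hle : x (3 * i) ≤ x (3 * k - 1) :=
        xle hpos hlac (3 * k - 1) (3 * i) (by omega) (by omega) (by omega)
      linarith [hfb.1, hfi.2]
  have hBA : lacunaryModify x m k
      = insert (2 * x (3 * k - 1) - x (3 * k - 2))
          ((lacunaryModify x m (k - 1)).erase (x (3 * k))) := by
    ext z
    rw [Finset.mem_insert, Finset.mem_erase, mem_lm hpos hlac k hm, mem_lm hpos hlac (k - 1) hm']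
    constructor
    · rintro (⟨j, hj1, hj2, hjn, rfl⟩ | ⟨i, hi1, hi2, rfl⟩)
      · right
        refine ⟨?_, Or.inl ⟨j, hj1, hj2, fun i h1 h2 => hjn i h1 (by omega), rfl⟩⟩
        intro he
        exact hjn k hk1 le_rfl (xinj hpos hlac j (3 * k) hj1 hj2 (by omega) hm he)
      · by_cases hik : i = k
        · subst hik; left; rfl
        · right
          have hfi := f_bounds hpos hlac i hi1 (by omega)
          have hle : x (3 * i) ≤ x (3 * k) :=
            xle hpos hlac (3 * k) (3 * i) (by omega) (by omega) hm
          exact ⟨by intro he; linarith [hfi.2], Or.inr ⟨i, hi1, by omega, rfl⟩⟩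
    · rintro (rfl | ⟨hne, (⟨j, hj1, hj2, hjn, rfl⟩ | ⟨i, hi1, hi2, rfl⟩)⟩)
      · right; exact ⟨k, hk1, le_rfl, rfl⟩
      · left
        refine ⟨j, hj1, hj2, ?_, rfl⟩
        intro i h1 h2
        by_cases hik : i = k
        · subst hik; intro hj3; apply hne; rw [hj3]
        · exact hjn i h1 (by omega)
      · right; exact ⟨i, hi1, by omega, rfl⟩
  have claimA : ∀ p q r s : ℤ, p ∈ lacunaryModify x m (k - 1) → q ∈ lacunaryModify x m (k - 1) →
      r ∈ lacunaryModify x m (k - 1) → s ∈ lacunaryModify x m (k - 1) → p + q = r + s →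
      (p = x (3 * k) ∨ q = x (3 * k) ∨ r = x (3 * k) ∨ s = x (3 * k)) →
      ((p, q) = (r, s) ∨ (p, q) = (s, r)) := by
    intro p q r s hp hq hr hs h hct
    rcases quad_class hpos hlac (k - 1) hm' p q r s hp hq hr hs h with
      ⟨h1, h2⟩ | ⟨h1, h2⟩ | hap | hap
    · left; rw [h1, h2]
    · right; rw [h1, h2]
    all_goals (
      exfalso
      obtain ⟨i, hi1, hi2, h1, h2, hpq⟩ := hap
      have hfi := f_bounds hpos hlac i hi1 (by omega)
      have e1 : x (3 * i - 1) < x (3 * k) := xlt hpos hlac _ _ (by omega) (by omega) hm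
      have e2 : x (3 * i - 2) < x (3 * k) := xlt hpos hlac _ _ (by omega) (by omega) hm
      have e3 : x (3 * i) ≤ x (3 * k) := xle hpos hlac (3 * k) (3 * i) (by omega) (by omega) hm
      rcases hpq with ⟨h5, h6⟩ | ⟨h5, h6⟩ <;> rcases hct with rfl | rfl | rfl | rfl <;>
        linarith [hfi.2])
  have claimB : ∀ p q r s : ℤ, p ∈ lacunaryModify x m k → q ∈ lacunaryModify x m k →
      r ∈ lacunaryModify x m k → s ∈ lacunaryModify x m k → p + q = r + s →
      (p = 2 * x (3 * k - 1) - x (3 * k - 2) ∨ q = 2 * x (3 * k - 1) - x (3 * k - 2) ∨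
       r = 2 * x (3 * k - 1) - x (3 * k - 2) ∨ s = 2 * x (3 * k - 1) - x (3 * k - 2)) →
      (((p, q) = (r, s) ∨ (p, q) = (s, r)) ∨
        ((p, q), (r, s)) ∈ FourQ (2 * x (3 * k - 1) - x (3 * k - 2)) (x (3 * k - 2))
          (x (3 * k - 1))) := by
    intro p q r s hp hq hr hs h hct
    rcases quad_class hpos hlac k hm p q r s hp hq hr hs h with
      ⟨h1, h2⟩ | ⟨h1, h2⟩ | hap | hap
    · left; left; rw [h1, h2]
    · left; right; rw [h1, h2]
    · obtain ⟨i, hi1, hi2, h1, h2, hpq⟩ := hap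
      by_cases hik : i = k
      · subst hik
        right
        subst h1; subst h2
        rcases hpq with ⟨h5, h6⟩ | ⟨h5, h6⟩ <;> subst h5 <;> subst h6 <;> simp [FourQ]
      · exfalso
        have hfi := f_bounds hpos hlac i hi1 (by omega)
        have e3 : x (3 * i) ≤ x (3 * k - 1) :=
          xle hpos hlac (3 * k - 1) (3 * i) (by omega) (by omega) (by omega)
        have e1 : x (3 * i - 1) ≤ x (3 * k - 1) :=
          xle hpos hlac (3 * k - 1) (3 * i - 1) (by omega) (by omega) (by omega)
        have e2 : x (3 * i - 2) ≤ x (3 * k - 1) :=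
          xle hpos hlac (3 * k - 1) (3 * i - 2) (by omega) (by omega) (by omega)
        rcases hpq with ⟨h5, h6⟩ | ⟨h5, h6⟩ <;> rcases hct with rfl | rfl | rfl | rfl <;>
          linarith [hfb.1, hfi.2]
    · obtain ⟨i, hi1, hi2, h1, h2, hpq⟩ := hap
      by_cases hik : i = k
      · subst hik
        right
        subst h1; subst h2
        rcases hpq with ⟨h5, h6⟩ | ⟨h5, h6⟩ <;> subst h5 <;> subst h6 <;> simp [FourQ]
      · exfalso
        have hfi := f_bounds hpos hlac i hi1 (by omega)
        have e3 : x (3 * i) ≤ x (3 * k - 1) :=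
          xle hpos hlac (3 * k - 1) (3 * i) (by omega) (by omega) (by omega)
        have e1 : x (3 * i - 1) ≤ x (3 * k - 1) :=
          xle hpos hlac (3 * k - 1) (3 * i - 1) (by omega) (by omega) (by omega)
        have e2 : x (3 * i - 2) ≤ x (3 * k - 1) :=
          xle hpos hlac (3 * k - 1) (3 * i - 2) (by omega) (by omega) (by omega)
        rcases hpq with ⟨h5, h6⟩ | ⟨h5, h6⟩ <;> rcases hct with rfl | rfl | rfl | rfl <;>
          linarith [hfb.1, hfi.2]
  show (Quad (lacunaryModify x m k)).card = (Quad (lacunaryModify x m (k - 1))).card + 4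
  exact energy_step (lacunaryModify x m (k - 1)) (lacunaryModify x m k)
    (2 * x (3 * k - 1) - x (3 * k - 2)) (x (3 * k - 2)) (x (3 * k - 1)) (x (3 * k))
    hBA hyA hy'A
    (Finset.mem_erase.mpr ⟨by intro he; linarith, huA⟩)
    (Finset.mem_erase.mpr ⟨by intro he; linarith, hvA⟩)
    (by ring)
    (by intro he; linarith [hfb.1])
    (by intro he; linarith [hfb.1])
    (by intro he; linarith)
    claimA claimB
end

section
/- Let A = {a₁ < a₂ < ⋯ < a_n} be a set of n integers, let a > a_n, and let A′ = A ∪ {a}. For j = 1, …, n let t_j = d⁺_A(a − a_j). Then E(A′) − E(A) = 4n + 1 + 4·∑_{j=1}^n t_j. -/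
/-- `d⁺_A(x)`: the number of pairs `(b, c) ∈ A²` with `b < c` and `c − b = x`. -/
def dPlus (A : Finset ℤ) (x : ℤ) : ℕ :=
  ((A ×ˢ A).filter fun p => p.1 < p.2 ∧ p.2 - p.1 = x).card

/-- Let `A = {a₁ < ⋯ < a_n}` be a nonempty finite set of integers, `a` larger than every
element of `A`, and `A′ = A ∪ {a}`.  With `t_j = d⁺_A(a − a_j)`, we have
`E(A′) − E(A) = 4n + 1 + 4·∑_j t_j`. -/
theorem energy_insert (A : Finset ℤ) (hA : A.Nonempty) (a : ℤ) (ha : ∀ b ∈ A, b < a) :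
    addEnergy (insert a A) =
      addEnergy A + 4 * A.card + 1 + 4 * ∑ b ∈ A, dPlus A (a - b) := by
  have ha' : a ∉ A := fun h => absurd (ha a h) (lt_irrefl a)
  have key : ∀ C : Finset ℤ, addEnergy C
      = ∑ x ∈ C, ∑ y ∈ C, ∑ z ∈ C, ∑ w ∈ C, (if x + y = z + w then 1 else 0) := by
    intro C
    rw [addEnergy, Finset.card_filter]
    simp only [Finset.sum_product]
  have hZ1 : (∑ x ∈ A, (A.filter fun w => a + a = x + w).card) = 0 := by
    refine Finset.sum_eq_zero fun x hx => ?_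
    rw [Finset.card_eq_zero, Finset.filter_eq_empty_iff]
    intro w hw
    have h1 := ha x hx; have h2 := ha w hw; omega
  have hZ2 : (∑ x ∈ A, (A.filter fun w => x + w = a + a).card) = 0 := by
    refine Finset.sum_eq_zero fun x hx => ?_
    rw [Finset.card_eq_zero, Finset.filter_eq_empty_iff]
    intro w hw
    have h1 := ha x hx; have h2 := ha w hw; omega
  have hS2 : (∑ x ∈ A, ∑ y ∈ A, (A.filter fun w => x + y = a + w).card)
      = ∑ x ∈ A, ∑ y ∈ A, (A.filter fun w => a + x = y + w).card := by
    simp only [Finset.card_filter]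
    rw [show (∑ x ∈ A, ∑ y ∈ A, ∑ w ∈ A, if x + y = a + w then (1:ℕ) else 0)
        = ∑ x ∈ A, ∑ w ∈ A, ∑ y ∈ A, (if x + y = a + w then (1:ℕ) else 0) from
      Finset.sum_congr rfl fun _ _ => Finset.sum_comm]
    rw [Finset.sum_comm]
    exact Finset.sum_congr rfl fun w _ => Finset.sum_congr rfl fun x _ =>
      Finset.sum_congr rfl fun y _ => if_congr eq_comm rfl rfl
  have hT : (∑ b ∈ A, dPlus A (a - b))
      = ∑ x ∈ A, ∑ y ∈ A, (A.filter fun w => a + x = y + w).card := by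
    have step : ∀ b ∈ A, dPlus A (a - b) = ∑ c ∈ A, ∑ d ∈ A,
        (if a + c = b + d then (1:ℕ) else 0) := by
      intro b hb
      rw [dPlus, Finset.card_filter]
      simp only [Finset.sum_product]
      refine Finset.sum_congr rfl fun c hc => Finset.sum_congr rfl fun d hd => ?_
      have hb' := ha b hb
      exact if_congr (by constructor <;> intro h <;> omega) rfl rfl
    rw [Finset.sum_congr rfl step]
    simp only [Finset.card_filter]
    exact Finset.sum_comm
  rw [key, key]
  simp only [Finset.sum_insert ha', Finset.sum_add_distrib]
  simp only [add_comm _ a, add_right_inj]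
  simp [Finset.sum_ite_eq, Finset.sum_ite_eq', ha', Finset.sum_ite_mem,
    Finset.inter_self, Finset.sum_const]
  rw [hZ1, hZ2, hS2, hT]
  ring
end
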